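/- Every d-dimensional face of the Birkhoff polytope B_n is the polytope of magic labelings of a positive digraph with n vertices and at most 2n + d - 1 edges; that is, each d-dimensional face of B_n has the form {M ∈ B_n : M_{ij} = 0 for all (i,j) not in S} for a set S of at most 2n - 1 + d positions such that for every (i,j) in S some matrix of the face has positive (i,j) entry. -/

import Mathlib

open Finset

/-- A face of a polytope `P`: either `P` itself, or the (nonempty) intersection of `P`
with a supporting hyperplane. -/
def IsFaceOf {W : Type*} [AddCommGroup W] [Module ℝ W] (F P : Set W) : Prop :=
  F = P ∨ ∃ (c : W →ₗ[ℝ] ℝ) (δ : ℝ), c ≠ 0 ∧ (∀ x ∈ P, c x ≤ δ) ∧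
    (∃ x ∈ P, c x = δ) ∧ F = {x ∈ P | c x = δ}

/-- The Birkhoff polytope `B_n` of `n × n` doubly stochastic matrices. -/
def Birkhoff (n : ℕ) : Set (Matrix (Fin n) (Fin n) ℝ) :=
  {M | (∀ i j, 0 ≤ M i j) ∧ (∀ i, ∑ j, M i j = 1) ∧ (∀ j, ∑ i, M i j = 1)}

/-!
Averaging points of a face `F` of `B_n` gives `N ∈ F` whose positive entries include those of
every point of `F`; let `S` be its positive support. If `M ∈ B_n` vanishes off `S`, then
`N + t (N - M) ∈ B_n` for small `t > 0`, so `N` lies inside a segment of `B_n` ending at `M`,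
and `M ∈ F`. Likewise `N + ε X ∈ F` for every `X` supported on `S` with zero line sums and small
`ε`, so these `X` lie in the direction of `F`. They form the kernel of the line-sum map on
matrices supported on `S`, whose image has dimension at most `2n - 1` because the row sums and
the column sums have the same total; hence `|S| ≤ 2n - 1 + d`.
-/

open Filter Topology

section Face

variable {W : Type*} [AddCommGroup W] [Module ℝ W] {F P : Set W}

theorem IsFaceOf.subset (hF : IsFaceOf F P) : F ⊆ P := by
  rcases hF with rfl | ⟨c, δ, -, -, -, rfl⟩
  exacts [subset_rfl, Set.sep_subset _ _]

theorem IsFaceOf.convex (hF : IsFaceOf F P) (hP : Convex ℝ P) : Convex ℝ F := by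
  rcases hF with rfl | ⟨c, δ, -, -, -, rfl⟩
  exacts [hP, hP.inter (convex_hyperplane c.isLinear δ)]

theorem IsFaceOf.nonempty (hF : IsFaceOf F P) (hP : P.Nonempty) : F.Nonempty := by
  rcases hF with rfl | ⟨c, δ, -, -, ⟨x, hxP, hx⟩, rfl⟩
  exacts [hP, ⟨x, hxP, hx⟩]

theorem IsFaceOf.mem_of_add_smul_sub_mem (hF : IsFaceOf F P) {x y : W} (hx : x ∈ F)
    (hy : y ∈ P) {t : ℝ} (ht : 0 < t) (hxy : x + t • (x - y) ∈ P) : y ∈ F := by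
  rcases hF with rfl | ⟨c, δ, -, hle, -, rfl⟩
  · exact hy
  have hcx : c x = δ := hx.2
  have hcxy : c (x + t • (x - y)) = δ + t * (δ - c y) := by
    rw [map_add, map_smul, map_sub, hcx, smul_eq_mul]
  have := hle _ hxy
  have := hle y hy
  exact ⟨hy, by nlinarith⟩

end Face

theorem Convex.exists_mem_forall_pos_of_pos {m n : Type*} [Fintype m] [Fintype n]
    {F : Set (Matrix m n ℝ)} (hF : Convex ℝ F) (hne : F.Nonempty)
    (hnonneg : ∀ M ∈ F, ∀ i j, 0 ≤ M i j) :
    ∃ N ∈ F, ∀ M ∈ F, ∀ i j, 0 < M i j → 0 < N i j := by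
  classical
  suffices ∀ T : Finset (m × n), ∃ N ∈ F, ∀ M ∈ F, ∀ p ∈ T, 0 < M p.1 p.2 → 0 < N p.1 p.2 by
    obtain ⟨N, hN, hpos⟩ := this univ
    exact ⟨N, hN, fun M hM i j => hpos M hM (i, j) (mem_univ _)⟩
  intro T
  induction T using Finset.induction_on with
  | empty =>
    obtain ⟨N, hN⟩ := hne
    exact ⟨N, hN, by simp⟩
  | insert p T _ ih =>
    obtain ⟨N, hN, hpos⟩ := ih
    by_cases hp : ∃ M ∈ F, 0 < M p.1 p.2
    · obtain ⟨M, hM, hMp⟩ := hp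
      refine ⟨(1 / 2 : ℝ) • N + (1 / 2 : ℝ) • M, hF hN hM (by norm_num) (by norm_num)
        (by norm_num), fun M' hM' q hq hM'q => ?_⟩
      simp only [Matrix.add_apply, Matrix.smul_apply, smul_eq_mul]
      have hNq := hnonneg N hN q.1 q.2
      have hMq := hnonneg M hM q.1 q.2
      rcases mem_insert.1 hq with rfl | hq
      · positivity
      · have := hpos M' hM' q hq hM'q
        positivity
    · refine ⟨N, hN, fun M hM q hq hMq => ?_⟩
      rcases mem_insert.1 hq with rfl | hq
      exacts [absurd ⟨M, hM, hMq⟩ hp, hpos M hM q hq hMq]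

section LineSums

variable {m n : Type*} [Fintype m] [Fintype n]

def lineSums : Matrix m n ℝ →ₗ[ℝ] (m → ℝ) × (n → ℝ) where
  toFun X := (fun i => ∑ j, X i j, fun j => ∑ i, X i j)
  map_add' X Y := by ext <;> simp [sum_add_distrib]
  map_smul' a X := by ext <;> simp [mul_sum]

theorem lineSums_apply (X : Matrix m n ℝ) :
    lineSums X = (fun i => ∑ j, X i j, fun j => ∑ i, X i j) := rfl

theorem range_lineSums_ne_top [Nonempty m] :
    LinearMap.range (lineSums (m := m) (n := n)) ≠ ⊤ := by
  classical
  intro htop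
  obtain ⟨X, hX⟩ := LinearMap.range_eq_top.1 htop (Pi.single (Classical.arbitrary m) 1, 0)
  rw [lineSums_apply, Prod.mk.injEq] at hX
  have hrows : ∑ i, ∑ j, X i j = 1 := by simp [hX.1]
  have hcols : ∑ j, ∑ i, X i j = 0 := by simp [hX.2]
  have hswap : ∑ i, ∑ j, X i j = ∑ j, ∑ i, X i j := sum_comm
  linarith

end LineSums

theorem mem_birkhoff_iff {n : ℕ} {M : Matrix (Fin n) (Fin n) ℝ} :
    M ∈ Birkhoff n ↔ (∀ i j, 0 ≤ M i j) ∧ lineSums M = (1, 1) := by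
  simp [Birkhoff, lineSums_apply, funext_iff]

theorem convex_birkhoff (n : ℕ) : Convex ℝ (Birkhoff n) := by
  intro M hM M' hM' a b ha hb hab
  rw [mem_birkhoff_iff] at hM hM' ⊢
  refine ⟨fun i j => ?_, ?_⟩
  · have := hM.1 i j
    have := hM'.1 i j
    simp only [Matrix.add_apply, Matrix.smul_apply, smul_eq_mul]
    positivity
  · rw [map_add, map_smul, map_smul, hM.2, hM'.2, ← add_smul, hab, one_smul]

theorem one_mem_birkhoff (n : ℕ) : (1 : Matrix (Fin n) (Fin n) ℝ) ∈ Birkhoff n := by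
  refine ⟨fun i j => ?_, fun i => ?_, fun j => ?_⟩
  · rw [Matrix.one_apply]
    split_ifs <;> norm_num
  all_goals simp [Matrix.one_apply]

noncomputable def posSupport {n : ℕ} (N : Matrix (Fin n) (Fin n) ℝ) : Finset (Fin n × Fin n) :=
  univ.filter fun p => 0 < N p.1 p.2

@[simp]
theorem mem_posSupport {n : ℕ} {N : Matrix (Fin n) (Fin n) ℝ} {p : Fin n × Fin n} :
    p ∈ posSupport N ↔ 0 < N p.1 p.2 := by
  simp [posSupport]

theorem exists_add_smul_mem_birkhoff {n : ℕ} {N X : Matrix (Fin n) (Fin n) ℝ}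
    (hN : N ∈ Birkhoff n) (hX : lineSums X = 0) (hXN : ∀ p ∉ posSupport N, X p.1 p.2 = 0) :
    ∃ ε > (0 : ℝ), N + ε • X ∈ Birkhoff n := by
  have hnonneg : ∀ᶠ ε in 𝓝[>] (0 : ℝ), ∀ i j, 0 ≤ N i j + ε * X i j := by
    refine eventually_all.2 fun i => eventually_all.2 fun j => ?_
    by_cases hpos : 0 < N i j
    · have hlim : Tendsto (fun ε => N i j + ε * X i j) (𝓝[>] 0) (𝓝 (N i j)) := by
        have hcont : Continuous fun ε : ℝ => N i j + ε * X i j := by fun_prop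
        convert (hcont.tendsto 0).mono_left nhdsWithin_le_nhds using 2
        simp
      exact (hlim.eventually (lt_mem_nhds hpos)).mono fun _ => le_of_lt
    · simp [hXN (i, j) (by simpa using hpos), (mem_birkhoff_iff.1 hN).1 i j]
  obtain ⟨ε, hε, hε0⟩ := (hnonneg.and self_mem_nhdsWithin).exists
  refine ⟨ε, hε0, mem_birkhoff_iff.2 ⟨fun i j => by simpa using hε i j, ?_⟩⟩
  rw [map_add, map_smul, hX, smul_zero, add_zero, (mem_birkhoff_iff.1 hN).2]

theorem eq_zero_of_notMem_posSupport {n : ℕ} {N : Matrix (Fin n) (Fin n) ℝ}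
    (hN : N ∈ Birkhoff n) {p : Fin n × Fin n} (hp : p ∉ posSupport N) : N p.1 p.2 = 0 :=
  le_antisymm (not_lt.1 (mem_posSupport.not.1 hp)) (hN.1 p.1 p.2)

theorem IsFaceOf.eq_birkhoff_vanishing_off_posSupport {n : ℕ}
    {F : Set (Matrix (Fin n) (Fin n) ℝ)} {N : Matrix (Fin n) (Fin n) ℝ}
    (hF : IsFaceOf F (Birkhoff n)) (hN : N ∈ F)
    (hmax : ∀ M ∈ F, ∀ i j, 0 < M i j → 0 < N i j) :
    F = {M ∈ Birkhoff n | ∀ p ∉ posSupport N, M p.1 p.2 = 0} := by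
  ext M
  refine ⟨fun hM => ⟨hF.subset hM, fun p hp => ?_⟩, fun ⟨hMB, hMN⟩ => ?_⟩
  · by_contra hne
    exact hp (mem_posSupport.2 (hmax M hM _ _ (((hF.subset hM).1 _ _).lt_of_ne' hne)))
  · have hNB := hF.subset hN
    have hsub : lineSums (N - M) = 0 := by
      rw [map_sub, (mem_birkhoff_iff.1 hNB).2, (mem_birkhoff_iff.1 hMB).2, sub_self]
    obtain ⟨ε, hε, hmem⟩ := exists_add_smul_mem_birkhoff hNB hsub fun p hp => by
      simp [hMN p hp, eq_zero_of_notMem_posSupport hNB hp]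
    exact hF.mem_of_add_smul_sub_mem hN hMB hε hmem

theorem card_le_finrank_of_supported {m n : Type*} [Fintype m] [Fintype n]
    (S : Finset (m × n)) (V : Submodule ℝ (Matrix m n ℝ))
    (hV : ∀ X : Matrix m n ℝ, (∀ p ∉ S, X p.1 p.2 = 0) → lineSums X = 0 → X ∈ V) :
    S.card ≤ Fintype.card m + Fintype.card n - 1 + Module.finrank ℝ V := by
  classical
  rcases isEmpty_or_nonempty m with hm | hm
  · simp [Finset.eq_empty_of_isEmpty S]
  let ι : (S → ℝ) →ₗ[ℝ] Matrix m n ℝ := LinearMap.pi fun i => LinearMap.pi fun j =>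
    if h : (i, j) ∈ S then LinearMap.proj ⟨(i, j), h⟩ else 0
  have hιS (f : S → ℝ) (p : S) : ι f p.1.1 p.1.2 = f p :=
    congrArg (fun g : (S → ℝ) →ₗ[ℝ] ℝ => g f) (dif_pos p.2)
  have hιoff (f : S → ℝ) (p) (hp : p ∉ S) : ι f p.1 p.2 = 0 :=
    congrArg (fun g : (S → ℝ) →ₗ[ℝ] ℝ => g f) (dif_neg hp)
  have hι : Function.Injective ι := fun f g hfg =>
    funext fun p => by simpa [hιS] using congr_fun₂ hfg p.1.1 p.1.2
  let Φ := lineSums ∘ₗ ι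
  have hker : Module.finrank ℝ (LinearMap.ker Φ) ≤ Module.finrank ℝ V :=
    LinearMap.finrank_le_finrank_of_injective
      (f := (ι ∘ₗ (LinearMap.ker Φ).subtype).codRestrict V fun f => hV _ (hιoff f) f.2)
      fun f g hfg => Subtype.ext (hι (congrArg Subtype.val hfg))
  have hrange : Module.finrank ℝ (LinearMap.range Φ) < Fintype.card m + Fintype.card n :=
    calc Module.finrank ℝ (LinearMap.range Φ)
        ≤ Module.finrank ℝ (LinearMap.range (lineSums (m := m) (n := n))) :=
          Submodule.finrank_mono (LinearMap.range_comp_le_range _ _)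
      _ < Module.finrank ℝ ((m → ℝ) × (n → ℝ)) := Submodule.finrank_lt range_lineSums_ne_top
      _ = Fintype.card m + Fintype.card n := by simp
  have hrank := Φ.finrank_range_add_finrank_ker
  rw [Module.finrank_fintype_fun_eq_card, Fintype.card_coe] at hrank
  omega

theorem birkhoff_faces_general (n d : ℕ) (F : Set (Matrix (Fin n) (Fin n) ℝ))
    (hF : IsFaceOf F (Birkhoff n))
    (hd : Module.finrank ℝ (affineSpan ℝ F).direction = d) :
    ∃ S : Finset (Fin n × Fin n), S.card ≤ 2 * n - 1 + d ∧
      F = {M ∈ Birkhoff n | ∀ p : Fin n × Fin n, p ∉ S → M p.1 p.2 = 0} ∧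
      ∀ p ∈ S, ∃ M ∈ F, 0 < M p.1 p.2 := by
  obtain ⟨N, hN, hmax⟩ := (hF.convex (convex_birkhoff n)).exists_mem_forall_pos_of_pos
    (hF.nonempty ⟨1, one_mem_birkhoff n⟩) fun M hM => (hF.subset hM).1
  have hF_eq := hF.eq_birkhoff_vanishing_off_posSupport hN hmax
  refine ⟨posSupport N, ?_, hF_eq, fun p hp => ⟨N, hN, mem_posSupport.1 hp⟩⟩
  have hdir (X : Matrix (Fin n) (Fin n) ℝ) (hXN : ∀ p ∉ posSupport N, X p.1 p.2 = 0)
      (hX : lineSums X = 0) : X ∈ (affineSpan ℝ F).direction := by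
    obtain ⟨ε, hε, hmem⟩ := exists_add_smul_mem_birkhoff (hF.subset hN) hX hXN
    have hNX : N + ε • X ∈ F := hF_eq ▸ ⟨hmem, fun p hp => by
      simp [hXN p hp, eq_zero_of_notMem_posSupport (hF.subset hN) hp]⟩
    have hεX : ε • X ∈ (affineSpan ℝ F).direction := by
      rw [direction_affineSpan]
      simpa using vsub_mem_vectorSpan ℝ hNX hN
    exact (Submodule.smul_mem_iff _ hε.ne').1 hεX
  simpa [hd, two_mul] using card_le_finrank_of_supported (posSupport N) _ hdir

/-- Every `d`-dimensional face of the Birkhoff polytope `B_n` is the polytope of magic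
labelings of a positive digraph with `n` vertices and at most `2n + d - 1` edges:
it has the form `{M ∈ B_n | M i j = 0 for all (i, j) ∉ S}` for a set `S` of at most
`2n - 1 + d` positions such that for every `(i, j) ∈ S` some matrix of the face has
positive `(i, j)` entry. -/
theorem birkhoff_faces (n d : ℕ) (hn : 0 < n) (F : Set (Matrix (Fin n) (Fin n) ℝ))
    (hF : IsFaceOf F (Birkhoff n))
    (hd : Module.finrank ℝ (affineSpan ℝ F).direction = d) :
    ∃ S : Finset (Fin n × Fin n), S.card ≤ 2 * n - 1 + d ∧
      F = {M ∈ Birkhoff n | ∀ p : Fin n × Fin n, p ∉ S → M p.1 p.2 = 0} ∧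
      ∀ p ∈ S, ∃ M ∈ F, 0 < M p.1 p.2 :=
  birkhoff_faces_general n d F hF hd
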